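/- arXiv:math/0512542 — 3 statements merged into one kernel-verified Lean document; each statement's English description precedes it below -/
import Mathlib

section
/- The tensor product of two objects of M(X) is again an object of M(X): given objects (V₁,P₁,Q₁) and (V₂,P₂,Q₂), the maps P₁₂(m) = Σ_{n∈X₂} P₁(n) ⊗ P₂(n⁻¹m) and Q₁₂(g) = Q₁(g) ⊗ Q₂(g) on V₁ ⊗ V₂ satisfy the four object axioms. -/
open TensorProduct

private lemma aux_sum_comp {ι : Type*} (s : Finset ι) {M N P : Type*}
    [AddCommGroup M] [Module ℂ M] [AddCommGroup N] [Module ℂ N]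
    [AddCommGroup P] [Module ℂ P]
    (f : ι → (M →ₗ[ℂ] N)) (g : P →ₗ[ℂ] M) :
    (∑ i ∈ s, f i) ∘ₗ g = ∑ i ∈ s, f i ∘ₗ g := by
  ext x; simp [LinearMap.sum_apply]

private lemma aux_comp_sum {ι : Type*} (s : Finset ι) {M N P : Type*}
    [AddCommGroup M] [Module ℂ M] [AddCommGroup N] [Module ℂ N]
    [AddCommGroup P] [Module ℂ P]
    (f : ι → (M →ₗ[ℂ] N)) (g : N →ₗ[ℂ] P) :
    g ∘ₗ (∑ i ∈ s, f i) = ∑ i ∈ s, g ∘ₗ f i := by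
  ext x; simp [LinearMap.sum_apply, map_sum]

private lemma aux_map_sum_left {ι : Type*} (s : Finset ι) {M N : Type*}
    [AddCommGroup M] [Module ℂ M] [AddCommGroup N] [Module ℂ N]
    (f : ι → (M →ₗ[ℂ] M)) (g : N →ₗ[ℂ] N) :
    TensorProduct.map (∑ i ∈ s, f i) g = ∑ i ∈ s, TensorProduct.map (f i) g := by
  apply TensorProduct.ext'
  intro x y
  simp [LinearMap.sum_apply, TensorProduct.sum_tmul]

private lemma aux_map_sum_right {ι : Type*} (s : Finset ι) {M N : Type*}
    [AddCommGroup M] [Module ℂ M] [AddCommGroup N] [Module ℂ N]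
    (f : M →ₗ[ℂ] M) (g : ι → (N →ₗ[ℂ] N)) :
    TensorProduct.map f (∑ i ∈ s, g i) = ∑ i ∈ s, TensorProduct.map f (g i) := by
  apply TensorProduct.ext'
  intro x y
  simp [LinearMap.sum_apply, TensorProduct.tmul_sum]

open TensorProduct in
/-- The tensor product of two objects of M(X) is again an object of M(X). -/
theorem tensor_product_is_object {X1 X2 : Type*} [Group X1] [Group X2]
    [Fintype X1] [Fintype X2] [DecidableEq X2]
    (act : X2 → X1 → X2)
    (act_mul : ∀ m n g, act (m * n) g = act m g * act n g)
    (act_comp : ∀ m g h, act m (g * h) = act (act m g) h)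
    (act_one : ∀ m, act m 1 = m)
    (bd : X2 →* X1)
    (xmod1 : ∀ m g, bd (act m g) = g⁻¹ * bd m * g)
    (xmod2 : ∀ m n, act m (bd n) = n⁻¹ * m * n)
    {V1 V2 : Type*} [AddCommGroup V1] [Module ℂ V1]
    [AddCommGroup V2] [Module ℂ V2]
    (P1 : X2 → (V1 →ₗ[ℂ] V1)) (Q1 : X1 → (V1 →ₗ[ℂ] V1))
    (P2 : X2 → (V2 →ₗ[ℂ] V2)) (Q2 : X1 → (V2 →ₗ[ℂ] V2))
    (hP1 : ∀ m n, P1 m ∘ₗ P1 n = if m = n then P1 m else 0)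
    (hP1sum : ∑ m : X2, P1 m = LinearMap.id)
    (hQ1 : ∀ g h, Q1 g ∘ₗ Q1 h = Q1 (g * h))
    (hPQ1 : ∀ m g, P1 m ∘ₗ Q1 g = Q1 g ∘ₗ P1 (act m g))
    (hP2 : ∀ m n, P2 m ∘ₗ P2 n = if m = n then P2 m else 0)
    (hP2sum : ∑ m : X2, P2 m = LinearMap.id)
    (hQ2 : ∀ g h, Q2 g ∘ₗ Q2 h = Q2 (g * h))
    (hPQ2 : ∀ m g, P2 m ∘ₗ Q2 g = Q2 g ∘ₗ P2 (act m g))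
    (P12 : X2 → (V1 ⊗[ℂ] V2 →ₗ[ℂ] V1 ⊗[ℂ] V2))
    (Q12 : X1 → (V1 ⊗[ℂ] V2 →ₗ[ℂ] V1 ⊗[ℂ] V2))
    (hP12 : ∀ m, P12 m = ∑ n : X2, TensorProduct.map (P1 n) (P2 (n⁻¹ * m)))
    (hQ12 : ∀ g, Q12 g = TensorProduct.map (Q1 g) (Q2 g)) :
    (∀ m n, P12 m ∘ₗ P12 n = if m = n then P12 m else 0) ∧
    (∑ m : X2, P12 m = LinearMap.id) ∧
    (∀ g h, Q12 g ∘ₗ Q12 h = Q12 (g * h)) ∧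
    (∀ m g, P12 m ∘ₗ Q12 g = Q12 g ∘ₗ P12 (act m g)) := by
  -- act m g⁻¹ is the inverse bijection of act · g, and act is a hom in m
  have act_one' : ∀ g, act 1 g = 1 := by
    intro g
    have := act_mul 1 1 g
    simpa using this.symm
  have act_inv : ∀ m g, act m⁻¹ g = (act m g)⁻¹ := by
    intro m g
    have h := act_mul m⁻¹ m g
    rw [inv_mul_cancel, act_one'] at h
    exact eq_inv_of_mul_eq_one_left h.symm
  have act_bij : ∀ g, Function.Bijective (fun m => act m g) := by
    intro g
    refine Function.bijective_iff_has_inverse.2 ⟨fun m => act m g⁻¹, ?_, ?_⟩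
    · intro m; simp only; rw [← act_comp, mul_inv_cancel, act_one]
    · intro m; simp only; rw [← act_comp, inv_mul_cancel, act_one]
  refine ⟨?_, ?_, ?_, ?_⟩
  · -- orthogonality
    intro m n
    simp only [hP12, aux_sum_comp, aux_comp_sum, ← TensorProduct.map_comp, hP1, hP2]
    by_cases hmn : m = n
    · subst hmn
      simp only [if_pos rfl]
      rw [Finset.sum_comm]
      refine Finset.sum_congr rfl fun a _ => ?_
      rw [Finset.sum_eq_single a]
      · simp
      · intro b _ hb
        simp only [if_neg (Ne.symm hb)]
        have : a⁻¹ * m ≠ b⁻¹ * m := by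
          intro h; exact hb (inv_injective (mul_right_cancel h)).symm
        simp
      · intro h; exact absurd (Finset.mem_univ a) h
    · rw [if_neg hmn]
      apply Finset.sum_eq_zero
      intro a _
      apply Finset.sum_eq_zero
      intro b _
      by_cases hab : b = a
      · subst hab
        simp [hmn]
      · simp [if_neg hab]
  · -- completeness
    rw [show (∑ m : X2, P12 m) = ∑ m : X2, ∑ n : X2, TensorProduct.map (P1 n) (P2 (n⁻¹ * m))
        from Finset.sum_congr rfl fun m _ => hP12 m]
    rw [Finset.sum_comm]
    have : ∀ n : X2, ∑ m : X2, TensorProduct.map (P1 n) (P2 (n⁻¹ * m))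
        = TensorProduct.map (P1 n) LinearMap.id := by
      intro n
      rw [← aux_map_sum_right]
      congr 1
      rw [← hP2sum]
      exact Fintype.sum_equiv (Equiv.mulLeft n⁻¹) _ _ fun x => rfl
    simp only [this]
    rw [← aux_map_sum_left, hP1sum]
    exact TensorProduct.map_id
  · -- Q multiplicative
    intro g h
    simp only [hQ12, ← TensorProduct.map_comp, hQ1, hQ2]
  · -- compatibility
    intro m g
    simp only [hP12, hQ12, aux_sum_comp, aux_comp_sum, ← TensorProduct.map_comp,
      hPQ1, hPQ2]
    refine Fintype.sum_equiv (Equiv.ofBijective _ (act_bij g)) _ _ fun n => ?_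
    simp only [Equiv.ofBijective_apply]
    congr 2
    rw [← act_inv, ← act_mul]
end

section
/- The braiding map R₁₂: V₁ ⊗ V₂ → V₂ ⊗ V₁, v₁ ⊗ v₂ ↦ Σ_{m∈X₂} Q₂(∂m)v₂ ⊗ P₁(m)v₁, is a morphism of M(X)-objects from (V₁,P₁,Q₁) ⊗ (V₂,P₂,Q₂) to (V₂,P₂,Q₂) ⊗ (V₁,P₁,Q₁). -/
open TensorProduct in
/-- The braiding map R₁₂ : V₁ ⊗ V₂ → V₂ ⊗ V₁,
v₁ ⊗ v₂ ↦ Σ_{m∈X₂} Q₂(∂m)v₂ ⊗ P₁(m)v₁, is a morphism of M(X)-objects from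
(V₁,P₁,Q₁) ⊗ (V₂,P₂,Q₂) to (V₂,P₂,Q₂) ⊗ (V₁,P₁,Q₁). -/
theorem braiding_is_morphism {X1 X2 : Type*} [Group X1] [Group X2]
    [Fintype X1] [Fintype X2] [DecidableEq X2]
    (act : X2 → X1 → X2)
    (act_mul : ∀ m n g, act (m * n) g = act m g * act n g)
    (act_comp : ∀ m g h, act m (g * h) = act (act m g) h)
    (act_one : ∀ m, act m 1 = m)
    (bd : X2 →* X1)
    (xmod1 : ∀ m g, bd (act m g) = g⁻¹ * bd m * g)
    (xmod2 : ∀ m n, act m (bd n) = n⁻¹ * m * n)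
    {V1 V2 : Type*} [AddCommGroup V1] [Module ℂ V1]
    [AddCommGroup V2] [Module ℂ V2]
    (P1 : X2 → (V1 →ₗ[ℂ] V1)) (Q1 : X1 → (V1 →ₗ[ℂ] V1))
    (P2 : X2 → (V2 →ₗ[ℂ] V2)) (Q2 : X1 → (V2 →ₗ[ℂ] V2))
    (hP1 : ∀ m n, P1 m ∘ₗ P1 n = if m = n then P1 m else 0)
    (hP1sum : ∑ m : X2, P1 m = LinearMap.id)
    (hQ1 : ∀ g h, Q1 g ∘ₗ Q1 h = Q1 (g * h))
    (hPQ1 : ∀ m g, P1 m ∘ₗ Q1 g = Q1 g ∘ₗ P1 (act m g))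
    (hP2 : ∀ m n, P2 m ∘ₗ P2 n = if m = n then P2 m else 0)
    (hP2sum : ∑ m : X2, P2 m = LinearMap.id)
    (hQ2 : ∀ g h, Q2 g ∘ₗ Q2 h = Q2 (g * h))
    (hPQ2 : ∀ m g, P2 m ∘ₗ Q2 g = Q2 g ∘ₗ P2 (act m g))
    (R : V1 ⊗[ℂ] V2 →ₗ[ℂ] V2 ⊗[ℂ] V1)
    -- R(v₁ ⊗ v₂) = Σ_m Q₂(∂m)v₂ ⊗ P₁(m)v₁
    (hR : ∀ (v1 : V1) (v2 : V2),
      R (v1 ⊗ₜ[ℂ] v2) = ∑ m : X2, Q2 (bd m) v2 ⊗ₜ[ℂ] P1 m v1) :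
    (∀ m : X2,
      R ∘ₗ (∑ n : X2, TensorProduct.map (P1 n) (P2 (n⁻¹ * m))) =
        (∑ n : X2, TensorProduct.map (P2 n) (P1 (n⁻¹ * m))) ∘ₗ R) ∧
    (∀ g : X1,
      R ∘ₗ TensorProduct.map (Q1 g) (Q2 g) =
        TensorProduct.map (Q2 g) (Q1 g) ∘ₗ R) := by
  have hP1' : ∀ m n (v : V1), P1 m (P1 n v) = if m = n then P1 m v else 0 := by
    intro m n v
    have := congrArg (fun f => f v) (hP1 m n)
    simpa [apply_ite (fun f : V1 →ₗ[ℂ] V1 => f v)] using this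
  have hPQ1' : ∀ m g (v : V1), P1 m (Q1 g v) = Q1 g (P1 (act m g) v) := by
    intro m g v
    have := congrArg (fun f => f v) (hPQ1 m g)
    simpa using this
  have hPQ2' : ∀ m g (v : V2), P2 m (Q2 g v) = Q2 g (P2 (act m g) v) := by
    intro m g v
    have := congrArg (fun f => f v) (hPQ2 m g)
    simpa using this
  have hQ2' : ∀ g h (v : V2), Q2 g (Q2 h v) = Q2 (g * h) v := by
    intro g h v
    have := congrArg (fun f => f v) (hQ2 g h)
    simpa using this
  constructor
  · intro m
    apply TensorProduct.ext'
    intro v1 v2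
    simp only [LinearMap.coe_comp, Function.comp_apply, LinearMap.coe_sum,
      Finset.sum_apply, TensorProduct.map_tmul, map_sum, hR]
    have lhs_eq : ∑ n : X2, ∑ k : X2,
        Q2 (bd k) (P2 (n⁻¹ * m) v2) ⊗ₜ[ℂ] P1 k (P1 n v1)
        = ∑ k : X2, Q2 (bd k) (P2 (k⁻¹ * m) v2) ⊗ₜ[ℂ] P1 k v1 := by
      refine Finset.sum_congr rfl fun n _ => ?_
      rw [Finset.sum_eq_single n]
      · rw [hP1' n n, if_pos rfl]
      · intro k _ hk
        rw [hP1' k n, if_neg hk, TensorProduct.tmul_zero]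
      · intro h; exact absurd (Finset.mem_univ n) h
    have rhs_eq : ∑ n : X2, ∑ k : X2,
        P2 n (Q2 (bd k) v2) ⊗ₜ[ℂ] P1 (n⁻¹ * m) (P1 k v1)
        = ∑ k : X2, Q2 (bd k) (P2 (k⁻¹ * m) v2) ⊗ₜ[ℂ] P1 k v1 := by
      have step1 : ∀ n : X2, ∑ k : X2,
          P2 n (Q2 (bd k) v2) ⊗ₜ[ℂ] P1 (n⁻¹ * m) (P1 k v1)
          = Q2 (bd (n⁻¹ * m)) (P2 (m⁻¹ * n * m) v2) ⊗ₜ[ℂ] P1 (n⁻¹ * m) v1 := by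
        intro n
        rw [Finset.sum_eq_single (n⁻¹ * m)]
        · rw [hP1' (n⁻¹*m) (n⁻¹*m), if_pos rfl, hPQ2' n (bd (n⁻¹*m)), xmod2]
          have h0 : (n⁻¹ * m)⁻¹ * n * (n⁻¹ * m) = m⁻¹ * n * m := by group
          rw [h0]
        · intro k _ hk
          rw [hP1' (n⁻¹*m) k, if_neg (Ne.symm hk), TensorProduct.tmul_zero]
        · intro h; exact absurd (Finset.mem_univ _) h
      rw [Finset.sum_congr rfl fun n _ => step1 n]
      refine Fintype.sum_equiv ((Equiv.inv X2).trans (Equiv.mulRight m)) _ _ ?_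
      intro n
      have h1 : (n⁻¹ * m)⁻¹ * m = m⁻¹ * n * m := by group
      simp only [Equiv.trans_apply, Equiv.inv_apply, Equiv.coe_mulRight, h1]
    rw [lhs_eq, rhs_eq]
  · intro g
    apply TensorProduct.ext'
    intro v1 v2
    simp only [LinearMap.coe_comp, Function.comp_apply, TensorProduct.map_tmul,
      hR, map_sum]
    refine Fintype.sum_equiv
      (⟨fun k => act k g, fun k => act k g⁻¹,
        fun k => by show act (act k g) g⁻¹ = k; rw [← act_comp, mul_inv_cancel, act_one],
        fun k => by show act (act k g⁻¹) g = k; rw [← act_comp, inv_mul_cancel, act_one]⟩ : X2 ≃ X2)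
      _ _ ?_
    intro k
    simp only [Equiv.coe_fn_mk]
    rw [hQ2' (bd k) g, hPQ1' k g, xmod1, hQ2' g]
    have h2 : bd k * g = g * (g⁻¹ * bd k * g) := by group
    rw [h2]
end

section
/- Assuming the Burnside relation Σ_p d_p² = |X₁||X₂| and the generalized orthogonality relations together with the ω-relation ψ_p(m, g∂m) = ω_p ψ_p(m,g), one has Σ_{p∈Irr(X)} d_p² ω_p⁻¹ = |X₁|·|K|, where K = ker ∂. -/
/-- Assuming the Burnside relation Σ_p d_p² = |X₁||X₂|, the second
orthogonality relation, and the ω-relation ψ_p(m, g∂m) = ω_p ψ_p(m,g), one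
has Σ_p d_p² ω_p⁻¹ = |X₁|·|K|, where K = ker ∂. -/
theorem sum_dim_sq_omega_inv {X1 X2 : Type*} [Group X1] [Group X2]
    [Fintype X1] [Fintype X2] [DecidableEq X1] [DecidableEq X2]
    (act : X2 → X1 → X2)
    (act_mul : ∀ m n g, act (m * n) g = act m g * act n g)
    (act_comp : ∀ m g h, act m (g * h) = act (act m g) h)
    (act_one : ∀ m, act m 1 = m)
    (bd : X2 →* X1)
    (xmod1 : ∀ m g, bd (act m g) = g⁻¹ * bd m * g)
    (xmod2 : ∀ m n, act m (bd n) = n⁻¹ * m * n)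
    {ι : Type*} [Fintype ι]
    (ψ : ι → X2 → X1 → ℂ) (d : ι → ℂ) (ω : ι → ℂ)
    (hd : ∀ p, d p = ∑ m : X2, ψ p m 1)
    (hω : ∀ p, ω p = (d p)⁻¹ * ∑ m : X2, ψ p m (bd m))
    -- Burnside relation
    (hBurnside : ∑ p : ι, (d p) ^ 2 = (Fintype.card X1 : ℂ) * Fintype.card X2)
    -- second orthogonality relation
    (hsecorth : ∀ (m n : X2) (g h : X1),
      ∑ p : ι, ψ p m g * ψ p n h =
        ∑ z : X1, (if n = act m z then (1 : ℂ) else 0) *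
          (if h⁻¹ = z⁻¹ * g * z then (1 : ℂ) else 0))
    -- the ω-relation
    (homega : ∀ p m g, ψ p m (g * bd m) = ω p * ψ p m g) :
    ∑ p : ι, (d p) ^ 2 * (ω p)⁻¹ =
      (Fintype.card X1 : ℂ) * Nat.card bd.ker := by
  -- Key: d_p = ω_p * Σ_m ψ_p(m, (∂m)⁻¹)
  have h1 : ∀ p, d p = ω p * ∑ m : X2, ψ p m (bd m)⁻¹ := by
    intro p
    rw [hd p, Finset.mul_sum]
    refine Finset.sum_congr rfl fun m _ => ?_
    have := homega p m (bd m)⁻¹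
    rwa [inv_mul_cancel] at this
  have key : ∀ p, d p ^ 2 * (ω p)⁻¹ = d p * ∑ m : X2, ψ p m (bd m)⁻¹ := by
    intro p
    by_cases hωp : ω p = 0
    · have hdp : d p = 0 := by rw [h1 p, hωp, zero_mul]
      simp [hdp]
    · rw [h1 p]; field_simp
  calc ∑ p : ι, (d p) ^ 2 * (ω p)⁻¹
      = ∑ p : ι, ∑ m : X2, ∑ n : X2, ψ p m 1 * ψ p n (bd n)⁻¹ := by
        refine Finset.sum_congr rfl fun p _ => ?_
        rw [key p, hd p, Finset.sum_mul]
        exact Finset.sum_congr rfl fun m _ => Finset.mul_sum _ _ _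
    _ = ∑ m : X2, ∑ n : X2, ∑ p : ι, ψ p m 1 * ψ p n (bd n)⁻¹ := by
        rw [Finset.sum_comm]
        exact Finset.sum_congr rfl fun m _ => Finset.sum_comm
    _ = ∑ m : X2, ∑ n : X2, ∑ z : X1, (if n = act m z then (1 : ℂ) else 0) *
          (if ((bd n)⁻¹)⁻¹ = z⁻¹ * 1 * z then (1 : ℂ) else 0) := by
        refine Finset.sum_congr rfl fun m _ => Finset.sum_congr rfl fun n _ => ?_
        exact hsecorth m n 1 (bd n)⁻¹
    _ = ∑ m : X2, ∑ z : X1, (if bd m = 1 then (1 : ℂ) else 0) := by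
        refine Finset.sum_congr rfl fun m _ => ?_
        rw [Finset.sum_comm]
        refine Finset.sum_congr rfl fun z _ => ?_
        simp only [ite_mul, one_mul, zero_mul]
        rw [Finset.sum_ite_eq' Finset.univ (act m z)
          (fun n => if ((bd n)⁻¹)⁻¹ = z⁻¹ * 1 * z then (1 : ℂ) else 0)]
        simp only [Finset.mem_univ, if_true, inv_inv, mul_one, xmod1]
        congr 1
        rw [eq_iff_iff]
        constructor
        · intro h
          have h2 : z⁻¹ * bd m = z⁻¹ * 1 := by rw [mul_one]; exact mul_right_cancel h
          exact mul_left_cancel h2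
        · intro h
          simp [h]
    _ = (Fintype.card X1 : ℂ) * Nat.card bd.ker := by
        simp only [Finset.sum_const, Finset.card_univ, nsmul_eq_mul]
        rw [← Finset.mul_sum]
        congr 1
        rw [Finset.sum_boole]
        have : Nat.card bd.ker = (Finset.univ.filter fun x => bd x = 1).card := by
          rw [Nat.card_congr (Equiv.subtypeEquivRight fun x => bd.mem_ker),
            Nat.card_eq_fintype_card, Fintype.card_subtype]
        rw [this]
end
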